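/- For all reals α > 0, β > 0 and every positive integer M, the double integral ∫₀^∞ ∫₀^∞ log₂(1 + α·z/(1 + β·y)) · (z^(M−1) e^(−z)/(M−1)!) · e^(−y) dz dy equals log₂(e) · Σ_{i=0}^{M−1} Σ_{l=0}^{i} α^(l+1−i) / (β · (i−l)!) · I₁(1/α, α/β, i, l+1). (This is the closed form R⁽²⁾(α, β, M) = E[log₂(1+X)] for X = α·Z/(1 + Y) with Z having the Gamma(M,1) density and Y = β·Y₀ with Y₀ unit-mean exponential, independent of Z.) -/

import Mathlib

/-!
Writing `log (1 + X) = ∫₀^∞ 𝟙[t < X] / (1 + t) dt` and exchanging the order of integration turns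
the inner `z`-integral into `∫₀^∞ P(Z > t (1 + β y) / α) / (1 + t) dt`, where the Gamma tail
`P(Z > s) = e^{-s} ∑_{i < M} s^i / i!` is explicit. Expanding `(1 + β y)^i` binomially, the
`y`-integrals are Gamma integrals `∫₀^∞ y^k e^{-(1 + tβ/α) y} dy = k! / (1 + tβ/α)^{k+1}`, so after
a second exchange of the order of integration every remaining `t`-integral is an `I₁`.
-/

open Real MeasureTheory Finset Set Filter Topology Function
open scoped Nat

noncomputable def I₁ (a b : ℝ) (m n : ℕ) : ℝ :=
  ∫ x in Set.Ioi (0 : ℝ), x ^ m * Real.exp (-a * x) / ((x + b) ^ n * (x + 1))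

lemma integrableOn_pow_mul_exp_neg_mul (n : ℕ) {a : ℝ} (ha : 0 < a) :
    IntegrableOn (fun x : ℝ => x ^ n * exp (-a * x)) (Ioi 0) := by
  refine (integrableOn_rpow_mul_exp_neg_mul_rpow (p := 1) (s := n)
    (neg_one_lt_zero.trans_le n.cast_nonneg) one_pos ha).congr_fun (fun x _ => ?_)
    measurableSet_Ioi
  simp only [rpow_natCast, rpow_one]

lemma integral_pow_mul_exp_neg_mul (n : ℕ) {a : ℝ} (ha : 0 < a) :
    ∫ x in Ioi (0 : ℝ), x ^ n * exp (-a * x) = n ! / a ^ (n + 1) := by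
  have h := integral_rpow_mul_exp_neg_mul_Ioi (a := n + 1) (by positivity) ha
  rw [add_sub_cancel_right, Gamma_nat_eq_factorial, ← Nat.cast_succ, rpow_natCast] at h
  simp_rw [rpow_natCast, ← neg_mul] at h
  rw [h, one_div, inv_pow, div_eq_mul_inv, mul_comm]

/-- The tail `P(Z > s)` of a `Gamma(n + 1, 1)` random variable `Z`. -/
noncomputable def erlangTail (n : ℕ) (s : ℝ) : ℝ :=
  exp (-s) * ∑ i ∈ range (n + 1), s ^ i / i !

lemma erlangTail_nonneg (n : ℕ) {s : ℝ} (hs : 0 ≤ s) : 0 ≤ erlangTail n s := by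
  unfold erlangTail; positivity

lemma erlangTail_succ (n : ℕ) (s : ℝ) :
    erlangTail (n + 1) s = erlangTail n s + s ^ (n + 1) * exp (-s) / (n + 1)! := by
  rw [erlangTail, erlangTail, sum_range_succ]
  ring

lemma hasDerivAt_erlangTail (n : ℕ) (s : ℝ) :
    HasDerivAt (erlangTail n) (-(s ^ n * exp (-s) / n !)) s := by
  induction n with
  | zero =>
    rw [show erlangTail 0 = fun s => exp (-s) from funext fun s => by simp [erlangTail]]
    simpa using (hasDerivAt_neg s).exp
  | succ n ih =>
    have hterm := ((hasDerivAt_pow (n + 1) s).fun_mul (hasDerivAt_neg s).exp).div_const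
      ((n + 1)! : ℝ)
    rw [show erlangTail (n + 1) = _ from funext (erlangTail_succ n)]
    refine (ih.add hterm).congr_deriv ?_
    rw [Nat.add_sub_cancel, Nat.factorial_succ, Nat.cast_mul]
    field_simp
    ring

lemma tendsto_erlangTail_atTop (n : ℕ) : Tendsto (erlangTail n) atTop (𝓝 0) := by
  have h : ∀ i ∈ range (n + 1),
      Tendsto (fun s : ℝ => s ^ i * exp (-s) / i !) atTop (𝓝 0) := fun i _ => by
    simpa using (tendsto_pow_mul_exp_neg_atTop_nhds_zero i).div_const (i ! : ℝ)
  have hsum := tendsto_finsetSum _ h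
  rw [sum_const_zero] at hsum
  refine hsum.congr fun s => ?_
  rw [erlangTail, mul_sum]
  exact sum_congr rfl fun i _ => by ring

lemma integral_Ioi_pow_mul_exp_neg_div_factorial (n : ℕ) {s : ℝ} (hs : 0 ≤ s) :
    ∫ z in Ioi s, z ^ n * exp (-z) / n ! = erlangTail n s := by
  have hint : IntegrableOn (fun z : ℝ => -(z ^ n * exp (-z) / n !)) (Ioi s) := by
    refine IntegrableOn.congr_fun ((((integrableOn_pow_mul_exp_neg_mul n one_pos).mono_set
      (Ioi_subset_Ioi hs)).div_const (n ! : ℝ)).neg) (fun z _ => ?_) measurableSet_Ioi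
    simp
  have h := integral_Ioi_of_hasDerivAt_of_tendsto' (fun z _ => hasDerivAt_erlangTail n z) hint
    (tendsto_erlangTail_atTop n)
  rwa [integral_neg, zero_sub, neg_inj] at h

lemma integral_integral_swap_of_nonneg {α β : Type*} [MeasurableSpace α] [MeasurableSpace β]
    {μ : Measure α} {ν : Measure β} [SFinite μ] [SFinite ν] {f : α → β → ℝ}
    (hf : AEStronglyMeasurable (uncurry f) (μ.prod ν)) (hf_nonneg : ∀ᵐ x ∂μ, 0 ≤ᵐ[ν] f x)
    (hf_int : ∀ᵐ x ∂μ, Integrable (f x) ν) (h_int : Integrable (fun x => ∫ y, f x y ∂ν) μ) :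
    ∫ x, ∫ y, f x y ∂ν ∂μ = ∫ y, ∫ x, f x y ∂μ ∂ν := by
  refine integral_integral_swap ((integrable_prod_iff hf).2 ⟨hf_int, h_int.congr ?_⟩)
  filter_upwards [hf_nonneg] with x hx
  exact integral_congr_ae (hx.mono fun y hy => (norm_of_nonneg hy).symm)

lemma log_one_add_eq_integral {X : ℝ} (hX : 0 ≤ X) :
    log (1 + X) = ∫ t in Ioi (0 : ℝ), (Iio X).indicator (fun t => (1 + t)⁻¹) t := by
  rw [setIntegral_indicator measurableSet_Iio, Ioi_inter_Iio, ← integral_Ioc_eq_integral_Ioo,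
    ← intervalIntegral.integral_of_le hX, intervalIntegral.integral_comp_add_left (· ⁻¹),
    integral_inv, add_zero, div_one]
  rw [Set.uIcc_of_le (by linarith)]
  exact fun h => by linarith [h.1]

lemma integrableOn_indicator_Iio_inv_one_add (X : ℝ) :
    IntegrableOn ((Iio X).indicator (fun t : ℝ => (1 + t)⁻¹)) (Ioi 0) := by
  rw [IntegrableOn, integrable_indicator_iff measurableSet_Iio, IntegrableOn,
    Measure.restrict_restrict measurableSet_Iio, Iio_inter_Ioi]
  refine (ContinuousOn.integrableOn_Icc ?_).mono_set Ioo_subset_Icc_self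
  exact ContinuousOn.inv₀ (by fun_prop) fun t ht => by linarith [ht.1]

lemma integrableOn_log_one_add_mul_mul_pow_mul_exp_neg (n : ℕ) {c : ℝ} (hc : 0 ≤ c) :
    IntegrableOn (fun z => log (1 + c * z) * (z ^ n * exp (-z) / n !)) (Ioi 0) := by
  refine Integrable.mono' (((integrableOn_pow_mul_exp_neg_mul (n + 1) one_pos).const_mul
    (c / n !))) (by fun_prop) ?_
  filter_upwards [self_mem_ae_restrict measurableSet_Ioi] with z hz
  have hz : 0 < z := hz
  have hlog : 0 ≤ log (1 + c * z) := log_nonneg (le_add_of_nonneg_right (by positivity))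
  rw [norm_of_nonneg (by positivity)]
  calc log (1 + c * z) * (z ^ n * exp (-z) / n !) ≤ c * z * (z ^ n * exp (-z) / n !) := by
        gcongr
        linarith [log_le_sub_one_of_pos (by positivity : 0 < 1 + c * z)]
    _ = c / n ! * (z ^ (n + 1) * exp (-1 * z)) := by rw [neg_one_mul]; ring

lemma integral_log_one_add_mul_mul_eq_integral_erlangTail (n : ℕ) {c : ℝ} (hc : 0 < c) :
    ∫ z in Ioi (0 : ℝ), log (1 + c * z) * (z ^ n * exp (-z) / n !)
      = ∫ t in Ioi (0 : ℝ), erlangTail n (t / c) / (1 + t) := by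
  set g : ℝ → ℝ → ℝ := fun z t =>
    (Iio (c * z)).indicator (fun t => (1 + t)⁻¹) t * (z ^ n * exp (-z) / n !) with hg
  have hg_inner : ∀ z ∈ Ioi (0 : ℝ),
      ∫ t in Ioi (0 : ℝ), g z t = log (1 + c * z) * (z ^ n * exp (-z) / n !) := fun z hz => by
    have hz : 0 < z := hz
    rw [integral_mul_const, ← log_one_add_eq_integral (by positivity)]
  have hg_outer : ∀ t ∈ Ioi (0 : ℝ),
      ∫ z in Ioi (0 : ℝ), g z t = erlangTail n (t / c) / (1 + t) := fun t ht => by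
    have ht : 0 < t := ht
    have hg_t : (g · t) =
        (Ioi (t / c)).indicator fun z => (1 + t)⁻¹ * (z ^ n * exp (-z) / n !) := by
      ext z
      simp only [hg, indicator_apply, Set.mem_Iio, Set.mem_Ioi, div_lt_iff₀ hc, mul_comm z c]
      split_ifs <;> simp
    rw [hg_t, setIntegral_indicator measurableSet_Ioi, Ioi_inter_Ioi,
      sup_eq_right.2 (by positivity), integral_const_mul,
      integral_Ioi_pow_mul_exp_neg_div_factorial n (by positivity), inv_mul_eq_div]
  have hg_meas : Measurable (uncurry g) := by
    simp only [hg, uncurry_def, indicator_apply, Set.mem_Iio]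
    exact ((measurable_const.add measurable_snd).inv.ite
      (measurableSet_lt measurable_snd (measurable_fst.const_mul c)) measurable_const).mul
      (by fun_prop)
  calc ∫ z in Ioi (0 : ℝ), log (1 + c * z) * (z ^ n * exp (-z) / n !)
      = ∫ z in Ioi (0 : ℝ), ∫ t in Ioi (0 : ℝ), g z t :=
        (setIntegral_congr_fun measurableSet_Ioi hg_inner).symm
    _ = ∫ t in Ioi (0 : ℝ), ∫ z in Ioi (0 : ℝ), g z t := by
        refine integral_integral_swap_of_nonneg hg_meas.aestronglyMeasurable ?_ ?_
          ((integrableOn_log_one_add_mul_mul_pow_mul_exp_neg n hc.le).congr_fun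
            (fun z hz => (hg_inner z hz).symm) measurableSet_Ioi)
        · filter_upwards [self_mem_ae_restrict measurableSet_Ioi] with z hz
          filter_upwards [self_mem_ae_restrict measurableSet_Ioi] with t ht
          have hz : 0 < z := hz
          have ht : 0 < t := ht
          simp only [hg, indicator_apply]
          split_ifs <;> positivity
        · exact ae_of_all _ fun z => (integrableOn_indicator_Iio_inv_one_add _).mul_const _
    _ = ∫ t in Ioi (0 : ℝ), erlangTail n (t / c) / (1 + t) :=
        setIntegral_congr_fun measurableSet_Ioi hg_outer

lemma one_add_mul_pow_mul_exp_neg_mul_eq_sum (a b : ℝ) (i : ℕ) (y : ℝ) :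
    (1 + b * y) ^ i * exp (-a * y)
      = ∑ k ∈ range (i + 1), (i.choose k * b ^ k) * (y ^ k * exp (-a * y)) := by
  rw [add_comm, add_pow, sum_mul]
  exact sum_congr rfl fun k _ => by ring

lemma integrableOn_one_add_mul_pow_mul_exp_neg_mul (b : ℝ) {a : ℝ} (ha : 0 < a) (i : ℕ) :
    IntegrableOn (fun y => (1 + b * y) ^ i * exp (-a * y)) (Ioi 0) := by
  simp_rw [one_add_mul_pow_mul_exp_neg_mul_eq_sum a b i]
  exact integrable_finsetSum _ fun k _ => (integrableOn_pow_mul_exp_neg_mul k ha).const_mul _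

lemma integral_one_add_mul_pow_mul_exp_neg_mul (b : ℝ) {a : ℝ} (ha : 0 < a) (i : ℕ) :
    ∫ y in Ioi (0 : ℝ), (1 + b * y) ^ i * exp (-a * y)
      = ∑ k ∈ range (i + 1), i.choose k * b ^ k * (k ! / a ^ (k + 1)) := by
  simp_rw [one_add_mul_pow_mul_exp_neg_mul_eq_sum a b i]
  rw [integral_finsetSum _ fun k _ => (integrableOn_pow_mul_exp_neg_mul k ha).const_mul _]
  simp_rw [integral_const_mul, integral_pow_mul_exp_neg_mul _ ha]

lemma exp_neg_mul_erlangTail_eq_sum {α : ℝ} (hα : α ≠ 0) (β : ℝ) (m : ℕ) (t y : ℝ) :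
    exp (-y) * erlangTail m (t * (1 + β * y) / α)
      = ∑ i ∈ range (m + 1), exp (-(1 / α) * t) * (t / α) ^ i / i !
          * ((1 + β * y) ^ i * exp (-(1 + t * β / α) * y)) := by
  rw [erlangTail, ← mul_assoc, ← exp_add, mul_sum]
  refine sum_congr rfl fun i _ => ?_
  have hexp : -y + -(t * (1 + β * y) / α) = -(1 / α) * t + -(1 + t * β / α) * y := by
    field_simp; ring
  rw [hexp, exp_add, show t * (1 + β * y) / α = t / α * (1 + β * y) by ring, mul_pow]
  ring

lemma integrableOn_exp_neg_mul_erlangTail {α : ℝ} (hα : 0 < α) {β : ℝ} (hβ : 0 ≤ β) (m : ℕ)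
    {t : ℝ} (ht : 0 ≤ t) :
    IntegrableOn (fun y => exp (-y) * erlangTail m (t * (1 + β * y) / α)) (Ioi 0) := by
  have hrate : 0 < 1 + t * β / α := by positivity
  simp_rw [exp_neg_mul_erlangTail_eq_sum hα.ne' β m t]
  exact integrable_finsetSum _ fun i _ =>
    (integrableOn_one_add_mul_pow_mul_exp_neg_mul β hrate i).const_mul _

lemma integral_exp_neg_mul_erlangTail {α β : ℝ} (hα : 0 < α) (hβ : 0 < β) (m : ℕ) {t : ℝ}
    (ht : 0 ≤ t) :
    ∫ y in Ioi (0 : ℝ), exp (-y) * erlangTail m (t * (1 + β * y) / α)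
      = ∑ i ∈ range (m + 1), ∑ k ∈ range (i + 1), α ^ ((k : ℝ) + 1 - i) / (β * (i - k)!) *
          (t ^ i * exp (-(1 / α) * t) / (t + α / β) ^ (k + 1)) := by
  have hrate : 0 < 1 + t * β / α := by positivity
  simp_rw [exp_neg_mul_erlangTail_eq_sum hα.ne' β m t]
  rw [integral_finsetSum _ fun i _ =>
    (integrableOn_one_add_mul_pow_mul_exp_neg_mul β hrate i).const_mul _]
  refine sum_congr rfl fun i _ => ?_
  rw [integral_const_mul, integral_one_add_mul_pow_mul_exp_neg_mul β hrate, mul_sum]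
  refine sum_congr rfl fun k hk => ?_
  have hki : k ≤ i := Nat.lt_succ_iff.1 (mem_range.1 hk)
  have hfact : (i.choose k : ℝ) * k ! * (i - k)! = i ! := by
    exact_mod_cast Nat.choose_mul_factorial_mul_factorial hki
  have hrpow : α ^ ((k : ℝ) + 1 - i) = α ^ (k + 1) / α ^ i := by
    rw [← rpow_natCast, ← rpow_natCast, ← rpow_sub hα]; push_cast; ring_nf
  have hrate' : 1 + t * β / α = β / α * (t + α / β) := by field_simp; ring
  have hchoose : (i.choose k : ℝ) ≠ 0 := by exact_mod_cast (Nat.choose_pos hki).ne'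
  rw [hrpow, hrate', ← hfact, mul_pow, div_pow, div_pow]
  field_simp
  ring

lemma integrableOn_I₁_integrand {a b : ℝ} (ha : 0 < a) (hb : 0 < b) (m n : ℕ) :
    IntegrableOn (fun x => x ^ m * exp (-a * x) / ((x + b) ^ n * (x + 1))) (Ioi 0) := by
  refine Integrable.mono' ((integrableOn_pow_mul_exp_neg_mul m ha).div_const (b ^ n))
    (Measurable.aestronglyMeasurable (by fun_prop)) ?_
  filter_upwards [self_mem_ae_restrict measurableSet_Ioi] with x hx
  have hx : 0 < x := hx
  rw [norm_of_nonneg (by positivity)]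
  gcongr
  calc b ^ n = b ^ n * 1 := (mul_one _).symm
    _ ≤ (x + b) ^ n * (x + 1) := by gcongr <;> linarith

lemma integral_logb_one_add_mul_div_eq_integral_erlangTail {α β y : ℝ} (hα : 0 < α)
    (hβy : 0 < 1 + β * y) (m : ℕ) :
    ∫ z in Ioi (0 : ℝ), logb 2 (1 + α * z / (1 + β * y)) * (z ^ m * exp (-z) / m !) * exp (-y)
      = logb 2 (exp 1) *
          ∫ t in Ioi (0 : ℝ), exp (-y) * erlangTail m (t * (1 + β * y) / α) / (1 + t) := by
  have hlogb : ∀ x, logb 2 x = logb 2 (exp 1) * log x := fun x => by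
    rw [logb, logb, log_exp]; ring
  calc ∫ z in Ioi (0 : ℝ), logb 2 (1 + α * z / (1 + β * y)) * (z ^ m * exp (-z) / m !) * exp (-y)
      = logb 2 (exp 1) * exp (-y) *
          ∫ z in Ioi (0 : ℝ), log (1 + α / (1 + β * y) * z) * (z ^ m * exp (-z) / m !) := by
        rw [← integral_const_mul]
        congr 1 with z
        rw [hlogb, mul_div_right_comm]
        ring
    _ = logb 2 (exp 1) *
          ∫ t in Ioi (0 : ℝ), exp (-y) * erlangTail m (t * (1 + β * y) / α) / (1 + t) := by
        rw [integral_log_one_add_mul_mul_eq_integral_erlangTail m (by positivity), mul_assoc,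
          ← integral_const_mul]
        congr 2 with t
        rw [div_div_eq_mul_div]
        ring

lemma integral_integral_exp_neg_mul_erlangTail_div {α β : ℝ} (hα : 0 < α) (hβ : 0 < β) (m : ℕ) :
    ∫ y in Ioi (0 : ℝ), ∫ t in Ioi (0 : ℝ), exp (-y) * erlangTail m (t * (1 + β * y) / α) / (1 + t)
      = ∑ i ∈ range (m + 1), ∑ k ∈ range (i + 1),
          α ^ ((k : ℝ) + 1 - i) / (β * (i - k)!) * I₁ (1 / α) (α / β) i (k + 1) := by
  set H : ℝ → ℝ → ℝ := fun y t => exp (-y) * erlangTail m (t * (1 + β * y) / α) / (1 + t)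
    with hH
  have hH_y : ∀ t ∈ Ioi (0 : ℝ), ∫ y in Ioi (0 : ℝ), H y t =
      ∑ i ∈ range (m + 1), ∑ k ∈ range (i + 1), α ^ ((k : ℝ) + 1 - i) / (β * (i - k)!) *
        (t ^ i * exp (-(1 / α) * t) / ((t + α / β) ^ (k + 1) * (t + 1))) := fun t ht => by
    rw [integral_div, integral_exp_neg_mul_erlangTail hα hβ m (le_of_lt ht), sum_div]
    refine sum_congr rfl fun i _ => ?_
    rw [sum_div]
    exact sum_congr rfl fun k _ => by rw [mul_div_assoc, div_div, add_comm 1 t]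
  have hI_int : ∀ i k, IntegrableOn (fun t => t ^ i * exp (-(1 / α) * t) /
      ((t + α / β) ^ k * (t + 1))) (Ioi 0) := fun i k =>
    integrableOn_I₁_integrand (by positivity) (by positivity) i k
  have hTail_cont : Continuous (erlangTail m) :=
    continuous_iff_continuousAt.2 fun s => (hasDerivAt_erlangTail m s).continuousAt
  rw [← integral_integral_swap_of_nonneg (f := fun t y => H y t)
    (Measurable.aestronglyMeasurable (by simp only [hH, uncurry_def]; fun_prop)) ?_ ?_ ?_,
    setIntegral_congr_fun measurableSet_Ioi hH_y]
  · rw [integral_finsetSum _ fun i _ => integrable_finsetSum _ fun k _ => (hI_int i _).const_mul _]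
    refine sum_congr rfl fun i _ => ?_
    rw [integral_finsetSum _ fun k _ => (hI_int i _).const_mul _]
    exact sum_congr rfl fun k _ => by rw [integral_const_mul, I₁]
  · filter_upwards [self_mem_ae_restrict measurableSet_Ioi] with t ht
    filter_upwards [self_mem_ae_restrict measurableSet_Ioi] with y hy
    have ht : 0 < t := ht
    have hy : 0 < y := hy
    have := erlangTail_nonneg m (s := t * (1 + β * y) / α) (by positivity)
    simp only [hH, Pi.zero_apply]
    positivity
  · filter_upwards [self_mem_ae_restrict measurableSet_Ioi] with t ht
    exact (integrableOn_exp_neg_mul_erlangTail hα hβ.le m (le_of_lt ht)).div_const _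
  · refine IntegrableOn.congr_fun ?_ (fun t ht => (hH_y t ht).symm) measurableSet_Ioi
    exact integrable_finsetSum _ fun i _ => integrable_finsetSum _ fun k _ =>
      (hI_int i _).const_mul _

/-- Closed form `R⁽²⁾(α, β, M)`: for `α, β > 0` and `M ≥ 1`,
`∫₀^∞ ∫₀^∞ log₂(1 + α z/(1 + β y)) (z^(M−1) e^(−z)/(M−1)!) e^(−y) dz dy
  = log₂(e) Σ_{i=0}^{M−1} Σ_{l=0}^{i} α^(l+1−i)/(β (i−l)!) I₁(1/α, α/β, i, l+1)`. -/
theorem stmt1 (α β : ℝ) (hα : 0 < α) (hβ : 0 < β) (M : ℕ) (hM : 0 < M) :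
    (∫ y in Set.Ioi (0 : ℝ), ∫ z in Set.Ioi (0 : ℝ),
        Real.logb 2 (1 + α * z / (1 + β * y)) *
          (z ^ (M - 1) * Real.exp (-z) / (Nat.factorial (M - 1))) * Real.exp (-y)) =
      Real.logb 2 (Real.exp 1) *
        ∑ i ∈ Finset.range M, ∑ l ∈ Finset.range (i + 1),
          α ^ ((l : ℝ) + 1 - (i : ℝ)) / (β * (Nat.factorial (i - l))) *
            I₁ (1 / α) (α / β) i (l + 1) := by
  obtain ⟨m, rfl⟩ : ∃ m, M = m + 1 := ⟨M - 1, (Nat.succ_pred_eq_of_pos hM).symm⟩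
  have hβy : ∀ y ∈ Ioi (0 : ℝ), 0 < 1 + β * y := fun y hy => by
    have hy : 0 < y := hy
    positivity
  rw [Nat.add_sub_cancel, setIntegral_congr_fun measurableSet_Ioi fun y hy =>
      integral_logb_one_add_mul_div_eq_integral_erlangTail hα (hβy y hy) m,
    integral_const_mul, integral_integral_exp_neg_mul_erlangTail_div hα hβ m]
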